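/- For any matrix A in the real symplectic group Sp(2n,ℝ), the matrix A(AᵀA)^{-1/2} belongs to U(n) = Sp(2n,ℝ) ∩ O(2n). -/

import Mathlib

/-!
Let `S = |A| = √(AᵀA)`, so that `r(A) = A S⁻¹`; this is orthogonal for every invertible `A`
(polar decomposition). It remains to see that `S` is symplectic. As `P = AᵀA` is symplectic and
symmetric, `Jᵀ P J = P⁻¹`. Conjugating by the orthogonal matrix `J` and inverting both commute
with the positive square root, so `Jᵀ S J = S⁻¹`, i.e. `S J S = J`.
-/

open Matrix

open scoped ComplexOrder in
/-- The positive semidefinite square root of a positive semidefinite matrix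
(removed from Mathlib; restored here with its old definition). -/
noncomputable def Matrix.PosSemidef.sqrt {n : Type*} [Fintype n] [DecidableEq n] {𝕜 : Type*}
    [RCLike 𝕜] {A : Matrix n n 𝕜} (hA : A.PosSemidef) : Matrix n n 𝕜 :=
  hA.1.eigenvectorUnitary.1 * diagonal ((↑) ∘ (√·) ∘ hA.1.eigenvalues) *
  (star hA.1.eigenvectorUnitary : Matrix n n 𝕜)

/-- The retraction `r(A) = A * (AᵀA)^{-1/2}` from `Sp(2n,ℝ)` to `U(n)`,
where `(AᵀA)^{1/2}` is the positive (semi)definite square root of `AᵀA = AᴴA`. -/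
noncomputable def symplecticRetract {l : Type*} [DecidableEq l] [Fintype l]
    (A : Matrix (l ⊕ l) (l ⊕ l) ℝ) : Matrix (l ⊕ l) (l ⊕ l) ℝ :=
  A * ((Matrix.posSemidef_conjTranspose_mul_self A).sqrt)⁻¹

namespace CFC

variable {A : Type*} [PartialOrder A] [Ring A] [TopologicalSpace A] [StarRing A]
  [Algebra ℝ A] [StarOrderedRing A] [NonUnitalContinuousFunctionalCalculus ℝ A IsSelfAdjoint]
  [NonnegSpectrumClass ℝ A] [IsSemitopologicalRing A] [T2Space A]

lemma sqrt_star_mul_mul_of_mem_unitary {u : A} (hu : u ∈ unitary A) {a : A} (ha : 0 ≤ a) :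
    sqrt (star u * a * u) = star u * sqrt a * u := by
  refine sqrt_unique ?_ (star_left_conjugate_nonneg (sqrt_nonneg a) u)
  calc star u * sqrt a * u * (star u * sqrt a * u)
      = star u * sqrt a * (u * star u) * sqrt a * u := by simp only [mul_assoc]
    _ = star u * a * u := by
      rw [Unitary.mul_star_self_of_mem hu, mul_one, mul_assoc (star u), sqrt_mul_sqrt_self a]

end CFC

open scoped ComplexOrder MatrixOrder

namespace Matrix

variable {n 𝕜 : Type*} [Fintype n] [DecidableEq n] [RCLike 𝕜]

lemma PosSemidef.sqrt_eq_cfcSqrt {A : Matrix n n 𝕜} (hA : A.PosSemidef) :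
    hA.sqrt = CFC.sqrt A := by
  rw [CFC.sqrt_eq_real_sqrt A hA.nonneg, cfcₙ_eq_cfc (hf0 := Real.sqrt_zero), hA.1.cfc_eq]
  simp [PosSemidef.sqrt, IsHermitian.cfc]

lemma isUnit_det_of_mul_self_eq {R : Type*} [CommRing R] {S P : Matrix n n R} (h : S * S = P)
    (hP : IsUnit P.det) : IsUnit S.det :=
  isUnit_of_mul_isUnit_left (by rwa [← det_mul, h])

lemma mul_inv_cfcAbs_mem_unitaryGroup {A : Matrix n n 𝕜} (hA : IsUnit A.det) :
    A * (CFC.abs A)⁻¹ ∈ unitaryGroup n 𝕜 := by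
  set S := CFC.abs A
  have hSS : S * S = Aᴴ * A := CFC.abs_mul_abs A
  have hS : IsUnit S.det :=
    isUnit_det_of_mul_self_eq hSS (by simpa [det_conjTranspose] using hA.star.mul hA)
  have hSh : Sᴴ = S := (CFC.abs_nonneg A).posSemidef.isHermitian
  rw [mem_unitaryGroup_iff', star_eq_conjTranspose, conjTranspose_mul, conjTranspose_nonsing_inv,
    hSh]
  calc S⁻¹ * Aᴴ * (A * S⁻¹) = S⁻¹ * (S * S) * S⁻¹ := by rw [hSS]; simp only [mul_assoc]
    _ = 1 := by rw [nonsing_inv_mul_cancel_left _ _ hS, mul_nonsing_inv _ hS]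

end Matrix

namespace SymplecticGroup

variable {l R : Type*} [DecidableEq l] [Fintype l]

lemma J_mem_unitaryGroup [CommRing R] [StarRing R] [TrivialStar R] :
    J l R ∈ unitaryGroup (l ⊕ l) R := by
  rw [mem_unitaryGroup_iff, star_eq_conjTranspose, conjTranspose_eq_transpose_of_trivial,
    J_transpose, mul_neg, J_squared, neg_neg]

lemma inv_mem [CommRing R] {A : Matrix (l ⊕ l) (l ⊕ l) R} (hA : A ∈ symplecticGroup l R) :
    A⁻¹ ∈ symplecticGroup l R := by
  simpa only [coe_inv'] using (⟨A, hA⟩⁻¹ : symplecticGroup l R).2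

lemma cfcSqrt_mem {P : Matrix (l ⊕ l) (l ⊕ l) ℝ} (hP : P ∈ symplecticGroup l ℝ)
    (hPpos : P.PosSemidef) : CFC.sqrt P ∈ symplecticGroup l ℝ := by
  set S := CFC.sqrt P
  have hPt : Pᵀ = P := by simpa using hPpos.isHermitian.eq
  have hJPJ : star (J l ℝ) * P * J l ℝ = P⁻¹ := by
    have hPJP : P * J l ℝ * P = J l ℝ := by simpa only [hPt] using mem_iff'.mp hP
    refine (inv_eq_left_inv ?_).symm
    rw [star_eq_conjTranspose, conjTranspose_eq_transpose_of_trivial, J_transpose]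
    simp only [neg_mul, mul_assoc]
    rw [← mul_assoc P, hPJP, J_squared, neg_neg]
  have hJSJ : star (J l ℝ) * S * J l ℝ = S⁻¹ := by
    rw [← CFC.sqrt_star_mul_mul_of_mem_unitary J_mem_unitaryGroup hPpos.nonneg, hJPJ,
      hPpos.inv_sqrt]
  have hS : IsUnit S.det :=
    isUnit_det_of_mul_self_eq (CFC.sqrt_mul_sqrt_self P hPpos.nonneg) (symplectic_det hP)
  have hSt : Sᵀ = S := by simpa using (CFC.sqrt_nonneg P).posSemidef.isHermitian.eq
  rw [mem_iff', hSt]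
  calc S * J l ℝ * S = J l ℝ * (star (J l ℝ) * S * J l ℝ) * S := by
        rw [← mul_assoc, ← mul_assoc, J_mem_unitaryGroup.2, one_mul]
    _ = J l ℝ := by rw [hJSJ, mul_assoc, nonsing_inv_mul _ hS, mul_one]

end SymplecticGroup

/-- For any `A ∈ Sp(2n,ℝ)`, the matrix `r(A) = A (AᵀA)^{-1/2}` belongs to
`U(n) = Sp(2n,ℝ) ∩ O(2n)`, i.e. it is symplectic and orthogonal. -/
theorem retract_mem_unitary {l : Type*} [DecidableEq l] [Fintype l]
    (A : Matrix (l ⊕ l) (l ⊕ l) ℝ) (hA : A ∈ Matrix.symplecticGroup l ℝ) :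
    symplecticRetract A ∈ Matrix.symplecticGroup l ℝ ∧
      (symplecticRetract A)ᵀ * symplecticRetract A = 1 := by
  have hAA : Aᴴ * A ∈ symplecticGroup l ℝ := by
    rw [conjTranspose_eq_transpose_of_trivial]
    exact mul_mem (SymplecticGroup.transpose_mem hA) hA
  have habs : CFC.abs A ∈ symplecticGroup l ℝ :=
    SymplecticGroup.cfcSqrt_mem hAA (posSemidef_conjTranspose_mul_self A)
  have hunit := mul_inv_cfcAbs_mem_unitaryGroup (SymplecticGroup.symplectic_det hA)
  rw [mem_unitaryGroup_iff', star_eq_conjTranspose, conjTranspose_eq_transpose_of_trivial] at hunit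
  rw [symplecticRetract, PosSemidef.sqrt_eq_cfcSqrt]
  exact ⟨mul_mem hA (SymplecticGroup.inv_mem habs), hunit⟩
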